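/- arXiv:math/0103194 — 5 statements merged into one kernel-verified Lean document; each statement's English description precedes it below -/
import Mathlib

section
/- (Garside) Let n ≥ 2. If two positive words W and W' in the letters σ_1,…,σ_{n−1} represent the same element of the braid group B_n, then W can be transformed into W' through a finite sequence of positive words, each obtained from the preceding one by a single application of a commutation relation (replacing an occurrence of σ_iσ_j by σ_jσ_i where |i−j| > 1) or a triple relation (replacing an occurrence of σ_iσ_jσ_i by σ_jσ_iσ_j where |i−j| = 1). Equivalently: two elements of the free monoid on σ_1,…,σ_{n−1} map to the same element of B_n if and only if they are identified by the monoid congruence generated by the relations σ_iσ_j = σ_jσ_i for |i−j| > 1 and σ_iσ_{i+1}σ_i = σ_{i+1}σ_iσ_{i+1}. -/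
/-- The braid relators on generators indexed by `Fin n` (so this presents the
braid group on `n + 1` strands): `σᵢσⱼ = σⱼσᵢ` for `|i - j| > 1` and
`σᵢσᵢ₊₁σᵢ = σᵢ₊₁σᵢσᵢ₊₁`. -/
def braidRels (n : ℕ) : Set (FreeGroup (Fin n)) :=
  {r | ∃ i j : Fin n, i.val + 2 ≤ j.val ∧
        r = FreeGroup.of i * FreeGroup.of j * (FreeGroup.of j * FreeGroup.of i)⁻¹} ∪
  {r | ∃ i j : Fin n, i.val + 1 = j.val ∧
        r = FreeGroup.of i * FreeGroup.of j * FreeGroup.of i *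
            (FreeGroup.of j * FreeGroup.of i * FreeGroup.of j)⁻¹}

/-- The braid group with `n` Artin generators, i.e. the braid group `B_{n+1}`
on `n + 1` strands. -/
abbrev BraidGroup (n : ℕ) : Type := PresentedGroup (braidRels n)

/-- The Artin generators (zero-based: `σ 0, …, σ (n-1)` are the paper's
`σ₁, …, σₙ`). -/
def σ {n : ℕ} (i : Fin n) : BraidGroup n := PresentedGroup.of i

/-- A single Hurwitz move `R_k` (the position `k` is encoded by the prefix `u`):
`(…, a, b, …) ↦ (…, a b a⁻¹, a, …)`. -/
def HurwitzMove {G : Type*} [Group G] (l l' : List G) : Prop :=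
  ∃ (u v : List G) (a b : G),
    l = u ++ a :: b :: v ∧ l' = u ++ (a * b * a⁻¹) :: a :: v

/-- Hurwitz equivalence: finite sequences of Hurwitz moves and their inverses. -/
def HurwitzEquiv {G : Type*} [Group G] : List G → List G → Prop :=
  Relation.EqvGen HurwitzMove

/-- One elementary braid relation between positive words: either a commutation
`σᵢσⱼ ↦ σⱼσᵢ` (`|i - j| > 1`) or a triple relation `σᵢσᵢ₊₁σᵢ ↦ σᵢ₊₁σᵢσᵢ₊₁`. -/
def braidMonoidRel (n : ℕ) (w w' : FreeMonoid (Fin n)) : Prop :=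
  (∃ i j : Fin n, i.val + 2 ≤ j.val ∧
     w = FreeMonoid.of i * FreeMonoid.of j ∧ w' = FreeMonoid.of j * FreeMonoid.of i) ∨
  (∃ i j : Fin n, i.val + 1 = j.val ∧
     w = FreeMonoid.of i * FreeMonoid.of j * FreeMonoid.of i ∧
     w' = FreeMonoid.of j * FreeMonoid.of i * FreeMonoid.of j)

/-!
Garside's argument. Let `M` be the positive braid monoid, i.e. the free monoid modulo the
commutation and triple relations. The heart of the proof is Garside's lemma: if
`σᵢ x = σⱼ y` in `M`, then `x = y` when `i = j`, and otherwise `x` and `y` factor through the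
least common multiple `σᵢσⱼ` resp. `σᵢσⱼσᵢ` of the two generators. It is proved by induction on
the length of `x` and on a derivation of the equality by the relations; the only difficult step
chains two such factorisations through a third generator `σ_q`, which takes a case analysis on
the relative position of `i`, `j`, `q`. In particular `M` is left cancellative, and right
cancellative by symmetry under word reversal.

The Garside element `Δ` is right divisible by every generator and quasi-central
(`Δ σᵢ = σ_{n-1-i} Δ`), so `Δ ^ |x|` is a left multiple of every `x`: any two elements of `M`
have a common left multiple. By Ore's theorem `M` embeds into its group of fractions, and the
braid group maps to that group sending `σᵢ` to `σᵢ`; hence `M` embeds into the braid group.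
-/

namespace FreeMonoid

variable {α : Type*}

theorem of_mul_eq_of_mul_iff {a b : α} {u v : FreeMonoid α} :
    of a * u = of b * v ↔ a = b ∧ u = v := by
  rw [← toList.injective.eq_iff, toList_of_mul, toList_of_mul, List.cons.injEq,
    toList.injective.eq_iff]

theorem mul_eq_of_mul_iff {a : α} {w y u : FreeMonoid α} :
    w * y = of a * u ↔ w = 1 ∧ y = of a * u ∨ ∃ w', w = of a * w' ∧ u = w' * y := by
  induction w using FreeMonoid.casesOn with
  | one => simp [eq_comm (a := (1 : FreeMonoid α))]
  | of_mul b w' => simp [mul_assoc, of_mul_eq_of_mul_iff, eq_comm]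

theorem exists_eq_of_mul_of_length_ne_zero {w : FreeMonoid α} (h : w.length ≠ 0) :
    ∃ a w', w = of a * w' := by
  induction w using FreeMonoid.casesOn with
  | one => exact absurd rfl h
  | of_mul a w' => exact ⟨a, w', rfl⟩

end FreeMonoid

abbrev BraidMonoid (n : ℕ) : Type := (conGen (braidMonoidRel n)).Quotient

namespace BraidMonoid

variable {n : ℕ}

def mk : FreeMonoid (Fin n) →* BraidMonoid n := (conGen (braidMonoidRel n)).mk'

def of (i : Fin n) : BraidMonoid n := mk (FreeMonoid.of i)

theorem mk_eq_mk {u v : FreeMonoid (Fin n)} : mk u = mk v ↔ conGen (braidMonoidRel n) u v :=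
  Con.eq _

theorem mk_of (i : Fin n) : mk (FreeMonoid.of i) = of i := rfl

@[elab_as_elim]
theorem induction_on {P : BraidMonoid n → Prop} (x : BraidMonoid n) (one : P 1)
    (of_mul : ∀ i x, P x → P (of i * x)) : P x := by
  induction x using Con.induction_on with
  | H u =>
    induction u using FreeMonoid.inductionOn' with
    | one => exact one
    | of_mul i u ih => exact of_mul i _ ih

def Distant (i j : Fin n) : Prop := i.val + 2 ≤ j.val ∨ j.val + 2 ≤ i.val

def Adjacent (i j : Fin n) : Prop := i.val + 1 = j.val ∨ j.val + 1 = i.val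

theorem Distant.symm {i j : Fin n} (h : Distant i j) : Distant j i := Or.symm h

theorem Adjacent.symm {i j : Fin n} (h : Adjacent i j) : Adjacent j i := Or.symm h

theorem Distant.ne {i j : Fin n} (h : Distant i j) : i ≠ j := by
  rintro rfl; unfold Distant at h; omega

theorem Adjacent.ne {i j : Fin n} (h : Adjacent i j) : i ≠ j := by
  rintro rfl; unfold Adjacent at h; omega

theorem Distant.not_adjacent {i j : Fin n} (h : Distant i j) : ¬Adjacent i j := by
  unfold Distant at h; unfold Adjacent; omega

theorem eq_or_distant_or_adjacent (i j : Fin n) : i = j ∨ Distant i j ∨ Adjacent i j := by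
  rw [Fin.ext_iff, Distant, Adjacent]
  omega

theorem mk_eq_mk_of_rel {u v : FreeMonoid (Fin n)} (h : braidMonoidRel n u v) : mk u = mk v :=
  mk_eq_mk.2 (ConGen.Rel.of _ _ h)

theorem of_mul_of_comm {i j : Fin n} (h : Distant i j) : of i * of j = of j * of i := by
  simp only [of, ← map_mul]
  rcases h with h | h
  · exact mk_eq_mk_of_rel (Or.inl ⟨i, j, h, rfl, rfl⟩)
  · exact (mk_eq_mk_of_rel (Or.inl ⟨j, i, h, rfl, rfl⟩)).symm

theorem of_braid {i j : Fin n} (h : Adjacent i j) :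
    of i * of j * of i = of j * of i * of j := by
  simp only [of, ← map_mul]
  rcases h with h | h
  · exact mk_eq_mk_of_rel (Or.inr ⟨i, j, h, rfl, rfl⟩)
  · exact (mk_eq_mk_of_rel (Or.inr ⟨j, i, h, rfl, rfl⟩)).symm

theorem of_left_comm {i j : Fin n} (h : Distant i j) (x : BraidMonoid n) :
    of i * (of j * x) = of j * (of i * x) := by
  rw [← mul_assoc, of_mul_of_comm h, mul_assoc]

theorem of_braid_mul {i j : Fin n} (h : Adjacent i j) (x : BraidMonoid n) :
    of i * (of j * (of i * x)) = of j * (of i * (of j * x)) := by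
  simp only [← mul_assoc, of_braid h]

theorem length_eq_of_conGen {u v : FreeMonoid (Fin n)} (h : conGen (braidMonoidRel n) u v) :
    u.length = v.length := by
  induction h with
  | of _ _ h => rcases h with ⟨i, j, -, rfl, rfl⟩ | ⟨i, j, -, rfl, rfl⟩ <;> simp
  | refl => rfl
  | symm _ ih => exact ih.symm
  | trans _ _ ih₁ ih₂ => exact ih₁.trans ih₂
  | mul _ _ ih₁ ih₂ => simp only [FreeMonoid.length_mul, ih₁, ih₂]

def length (x : BraidMonoid n) : ℕ :=
  Con.liftOn x FreeMonoid.length fun _ _ => length_eq_of_conGen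

@[simp]
theorem length_one : length (1 : BraidMonoid n) = 0 := rfl

@[simp]
theorem length_of (i : Fin n) : length (of i) = 1 := rfl

@[simp]
theorem length_mul (x y : BraidMonoid n) : length (x * y) = length x + length y := by
  induction x using Con.induction_on with
  | H u =>
    induction y using Con.induction_on with
    | H v => exact FreeMonoid.length_mul u v

theorem length_eq_of_of_mul_eq {i j : Fin n} {x y : BraidMonoid n} (h : of i * x = of j * y) :
    length x = length y := by
  simpa using congrArg length h

/-! ### Garside's lemma -/

def ThroughLcm (i j : Fin n) (x y : BraidMonoid n) : Prop :=
  i = j ∧ x = y ∨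
  (Distant i j ∧ ∃ z, x = of j * z ∧ y = of i * z) ∨
  (Adjacent i j ∧ ∃ z, x = of j * (of i * z) ∧ y = of i * (of j * z))

section ThroughLcm

variable {i j : Fin n} {x y : BraidMonoid n}

theorem throughLcm_self_iff : ThroughLcm i i x y ↔ x = y := by
  refine ⟨?_, fun h => Or.inl ⟨rfl, h⟩⟩
  rintro (⟨-, h⟩ | ⟨h, -⟩ | ⟨h, -⟩)
  exacts [h, absurd rfl h.ne, absurd rfl h.ne]

theorem throughLcm_iff_of_distant (hij : Distant i j) :
    ThroughLcm i j x y ↔ ∃ z, x = of j * z ∧ y = of i * z := by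
  refine ⟨?_, fun h => Or.inr (Or.inl ⟨hij, h⟩)⟩
  rintro (⟨rfl, -⟩ | ⟨-, h⟩ | ⟨h, -⟩)
  exacts [absurd rfl hij.ne, h, absurd h hij.not_adjacent]

theorem throughLcm_iff_of_adjacent (hij : Adjacent i j) :
    ThroughLcm i j x y ↔ ∃ z, x = of j * (of i * z) ∧ y = of i * (of j * z) := by
  refine ⟨?_, fun h => Or.inr (Or.inr ⟨hij, h⟩)⟩
  rintro (⟨rfl, -⟩ | ⟨h, -⟩ | ⟨-, h⟩)
  exacts [absurd rfl hij.ne, absurd hij h.not_adjacent, h]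

theorem ThroughLcm.symm (h : ThroughLcm i j x y) : ThroughLcm j i y x := by
  rcases h with ⟨rfl, rfl⟩ | ⟨hij, z, rfl, rfl⟩ | ⟨hij, z, rfl, rfl⟩
  · exact Or.inl ⟨rfl, rfl⟩
  · exact Or.inr (Or.inl ⟨hij.symm, z, rfl, rfl⟩)
  · exact Or.inr (Or.inr ⟨hij.symm, z, rfl, rfl⟩)

theorem ThroughLcm.length_eq (h : ThroughLcm i j x y) : length x = length y := by
  rcases h with ⟨-, rfl⟩ | ⟨-, z, rfl, rfl⟩ | ⟨-, z, rfl, rfl⟩ <;> simp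

theorem ThroughLcm.mul_right (h : ThroughLcm i j x y) (w : BraidMonoid n) :
    ThroughLcm i j (x * w) (y * w) := by
  rcases h with ⟨rfl, rfl⟩ | ⟨hij, z, rfl, rfl⟩ | ⟨hij, z, rfl, rfl⟩
  · exact Or.inl ⟨rfl, rfl⟩
  · exact Or.inr (Or.inl ⟨hij, z * w, by simp only [mul_assoc], by simp only [mul_assoc]⟩)
  · exact Or.inr (Or.inr ⟨hij, z * w, by simp only [mul_assoc], by simp only [mul_assoc]⟩)

theorem ThroughLcm.of_mul {k : Fin n} (hi : Distant k i) (hj : Distant k j)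
    (h : ThroughLcm i j x y) : ThroughLcm i j (of k * x) (of k * y) := by
  rcases h with ⟨rfl, rfl⟩ | ⟨hij, z, rfl, rfl⟩ | ⟨hij, z, rfl, rfl⟩
  · exact Or.inl ⟨rfl, rfl⟩
  · exact Or.inr (Or.inl ⟨hij, of k * z, of_left_comm hj z, of_left_comm hi z⟩)
  · refine Or.inr (Or.inr ⟨hij, of k * z, ?_, ?_⟩)
    · rw [of_left_comm hj, of_left_comm hi]
    · rw [of_left_comm hi, of_left_comm hj]

end ThroughLcm

def ThroughLcmBelow (n ℓ : ℕ) : Prop :=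
  ∀ (i j : Fin n) (x y : BraidMonoid n), length x < ℓ → of i * x = of j * y → ThroughLcm i j x y

section Transitivity

variable {ℓ : ℕ} {i j q : Fin n} {z₁ z₂ : BraidMonoid n}

theorem throughLcm_of_distant_of_adjacent (H : ThroughLcmBelow n ℓ)
    (hx : length (of q * z₁) ≤ ℓ) (hiq : Distant i q) (hqj : Adjacent q j)
    (ht : of i * z₁ = of j * (of q * z₂)) :
    ThroughLcm i j (of q * z₁) (of q * (of j * z₂)) := by
  simp only [length_mul, length_of] at hx
  have h₁ := H i j z₁ (of q * z₂) (by omega) ht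
  rcases eq_or_distant_or_adjacent i j with rfl | hij | hij
  · exact absurd hqj hiq.symm.not_adjacent
  · obtain ⟨z₃, rfl, h₃⟩ := (throughLcm_iff_of_distant hij).1 h₁
    have hz₂ := length_eq_of_of_mul_eq h₃
    simp only [length_mul, length_of] at hx
    obtain ⟨z₄, rfl, rfl⟩ := (throughLcm_iff_of_distant hiq.symm).1 (H q i z₂ z₃ (by omega) h₃)
    refine (throughLcm_iff_of_distant hij).2 ⟨of q * (of j * z₄), of_braid_mul hqj z₄, ?_⟩
    rw [of_left_comm hij.symm, of_left_comm hiq.symm]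
  · obtain ⟨z₃, rfl, h₃⟩ := (throughLcm_iff_of_adjacent hij).1 h₁
    have hz₂ := length_eq_of_of_mul_eq h₃
    simp only [length_mul, length_of] at hx hz₂
    obtain ⟨z₄, rfl, h₄⟩ := (throughLcm_iff_of_distant hiq.symm).1 (H q i z₂ _ (by omega) h₃)
    have hz₃ := length_eq_of_of_mul_eq h₄
    obtain ⟨z₅, rfl, rfl⟩ := (throughLcm_iff_of_adjacent hqj.symm).1 (H j q z₃ z₄ (by omega) h₄)
    refine (throughLcm_iff_of_adjacent hij).2 ⟨of q * (of j * (of i * z₅)), ?_, ?_⟩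
    · rw [of_left_comm hiq (of j * z₅), of_braid_mul hqj, of_braid_mul hij.symm z₅,
        of_left_comm hiq.symm]
    · rw [of_braid_mul hij.symm, of_left_comm hiq.symm, of_left_comm hiq z₅,
        of_braid_mul hqj (of i * z₅)]

theorem throughLcm_of_adjacent_of_adjacent (H : ThroughLcmBelow n ℓ)
    (hx : length (of q * (of i * z₁)) ≤ ℓ) (hiq : Adjacent i q) (hqj : Adjacent q j)
    (ht : of i * (of q * z₁) = of j * (of q * z₂)) :
    ThroughLcm i j (of q * (of i * z₁)) (of q * (of j * z₂)) := by
  simp only [length_mul, length_of] at hx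
  have h₁ := H i j _ _ (by simp; omega) ht
  rcases eq_or_distant_or_adjacent i j with rfl | hij | hij
  · have h₂ := throughLcm_self_iff.1 h₁
    rw [throughLcm_self_iff.1 (H q q z₁ z₂ (by omega) h₂)]
    exact throughLcm_self_iff.2 rfl
  · obtain ⟨z₃, h₃, h₃'⟩ := (throughLcm_iff_of_distant hij).1 h₁
    have hz₃ := length_eq_of_of_mul_eq h₃
    obtain ⟨z₄, rfl, rfl⟩ := (throughLcm_iff_of_adjacent hqj).1 (H q j z₁ z₃ (by omega) h₃)
    have hz₂ := length_eq_of_of_mul_eq h₃'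
    simp only [length_mul, length_of] at hx hz₂
    obtain ⟨z₅, rfl, h₅⟩ := (throughLcm_iff_of_adjacent hiq.symm).1 (H q i z₂ _ (by omega) h₃')
    have h₆ := throughLcm_self_iff.1 (H q q _ _ (by simp; omega) h₅)
    have hz₅ := length_eq_of_of_mul_eq h₆
    obtain ⟨z₆, rfl, rfl⟩ := (throughLcm_iff_of_distant hij.symm).1 (H j i z₄ z₅ (by omega) h₆)
    refine (throughLcm_iff_of_distant hij).2 ⟨of q * (of i * (of j * (of q * z₆))), ?_, ?_⟩
    · rw [of_left_comm hij, of_braid_mul hiq z₆, of_braid_mul hqj,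
        of_left_comm hij.symm (of q * z₆)]
    · rw [of_left_comm hij.symm, of_braid_mul hqj.symm z₆, of_braid_mul hiq.symm]
  · exfalso; unfold Adjacent at hiq hqj hij; omega

theorem ThroughLcm.trans {x t y : BraidMonoid n} (H : ThroughLcmBelow n ℓ) (hx : length x ≤ ℓ)
    (h₁ : ThroughLcm i q x t) (h₂ : ThroughLcm q j t y) : ThroughLcm i j x y := by
  have hy : length y ≤ ℓ := (h₁.length_eq.trans h₂.length_eq) ▸ hx
  obtain ⟨rfl, rfl⟩ | ⟨hiq, z₁, rfl, rfl⟩ | ⟨hiq, z₁, rfl, rfl⟩ := h₁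
  · exact h₂
  · obtain ⟨rfl, rfl⟩ | ⟨hqj, z₂, ht, rfl⟩ | ⟨hqj, z₂, ht, rfl⟩ := h₂
    · exact (throughLcm_iff_of_distant hiq).2 ⟨z₁, rfl, rfl⟩
    · simp only [length_mul, length_of] at hx
      exact (H i j z₁ z₂ (by omega) ht).of_mul hiq.symm hqj
    · exact throughLcm_of_distant_of_adjacent H hx hiq hqj ht
  · obtain ⟨rfl, rfl⟩ | ⟨hqj, z₂, ht, rfl⟩ | ⟨hqj, z₂, ht, rfl⟩ := h₂
    · exact (throughLcm_iff_of_adjacent hiq).2 ⟨z₁, rfl, rfl⟩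
    · exact (throughLcm_of_distant_of_adjacent H hy hqj.symm hiq.symm ht.symm).symm
    · exact throughLcm_of_adjacent_of_adjacent H hx hiq hqj ht

end Transitivity

theorem throughLcm_of_braidMonoidRel {i j : Fin n} {u v : FreeMonoid (Fin n)}
    (h : braidMonoidRel n (.of i * u) (.of j * v)) : ThroughLcm i j (mk u) (mk v) := by
  rcases h with ⟨p, q, hpq, ha, hb⟩ | ⟨p, q, hpq, ha, hb⟩
  · obtain ⟨rfl, rfl⟩ := FreeMonoid.of_mul_eq_of_mul_iff.1 ha
    obtain ⟨rfl, rfl⟩ := FreeMonoid.of_mul_eq_of_mul_iff.1 hb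
    exact (throughLcm_iff_of_distant (Or.inl hpq)).2 ⟨1, (mul_one _).symm, (mul_one _).symm⟩
  · rw [mul_assoc] at ha hb
    obtain ⟨rfl, rfl⟩ := FreeMonoid.of_mul_eq_of_mul_iff.1 ha
    obtain ⟨rfl, rfl⟩ := FreeMonoid.of_mul_eq_of_mul_iff.1 hb
    exact (throughLcm_iff_of_adjacent (Or.inl hpq)).2 ⟨1, by simp [mk_of], by simp [mk_of]⟩

theorem throughLcm_of_conGen {ℓ : ℕ} (H : ThroughLcmBelow n ℓ) {a b : FreeMonoid (Fin n)}
    (hab : conGen (braidMonoidRel n) a b) :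
    ∀ {i j : Fin n} {u v : FreeMonoid (Fin n)}, a = .of i * u → b = .of j * v → u.length ≤ ℓ →
      ThroughLcm i j (mk u) (mk v) := by
  induction hab with
  | of a b h =>
    rintro i j u v rfl rfl -
    exact throughLcm_of_braidMonoidRel h
  | refl a =>
    rintro i j u v rfl hb -
    obtain ⟨rfl, rfl⟩ := FreeMonoid.of_mul_eq_of_mul_iff.1 hb
    exact throughLcm_self_iff.2 rfl
  | symm h ih =>
    rintro i j u v rfl rfl hu
    have := length_eq_of_conGen h
    simp only [FreeMonoid.length_mul, FreeMonoid.length_of] at this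
    exact (ih rfl rfl (by omega)).symm
  | @trans a b c h₁ h₂ ih₁ ih₂ =>
    rintro i j u v rfl rfl hu
    have hb := length_eq_of_conGen h₁
    simp only [FreeMonoid.length_mul, FreeMonoid.length_of] at hb
    obtain ⟨q, t, rfl⟩ := FreeMonoid.exists_eq_of_mul_of_length_ne_zero (w := b) (by omega)
    simp only [FreeMonoid.length_mul, FreeMonoid.length_of] at hb
    exact (ih₁ rfl rfl hu).trans H hu (ih₂ rfl rfl (by omega))
  | @mul w x y z h₁ h₂ ih₁ ih₂ =>
    intro i j u v ha hb hu
    have hwx := length_eq_of_conGen h₁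
    rcases FreeMonoid.mul_eq_of_mul_iff.1 ha with ⟨rfl, rfl⟩ | ⟨w', rfl, rfl⟩
    · obtain rfl : x = 1 := FreeMonoid.length_eq_zero.1 hwx.symm
      exact ih₂ rfl (by simpa using hb) hu
    · simp only [FreeMonoid.length_mul, FreeMonoid.length_of] at hwx hu
      obtain ⟨j', x', rfl⟩ :=
        FreeMonoid.exists_eq_of_mul_of_length_ne_zero (by omega : x.length ≠ 0)
      rw [mul_assoc] at hb
      obtain ⟨rfl, rfl⟩ := FreeMonoid.of_mul_eq_of_mul_iff.1 hb
      rw [map_mul, map_mul, mk_eq_mk.2 h₂]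
      exact (ih₁ rfl rfl (by omega)).mul_right (mk z)

theorem throughLcmBelow (ℓ : ℕ) : ThroughLcmBelow n ℓ := by
  induction ℓ with
  | zero => exact fun _ _ _ _ h => absurd h (Nat.not_lt_zero _)
  | succ ℓ H =>
    intro i j x y hx hxy
    induction x using Con.induction_on with
    | H u =>
      induction y using Con.induction_on with
      | H v => exact throughLcm_of_conGen H (mk_eq_mk.1 hxy) rfl rfl (Nat.lt_succ_iff.1 hx)

theorem throughLcm_of_of_mul_eq {i j : Fin n} {x y : BraidMonoid n} (h : of i * x = of j * y) :
    ThroughLcm i j x y :=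
  throughLcmBelow (length x + 1) i j x y (Nat.lt_succ_self _) h

theorem conGen_reverse {u v : FreeMonoid (Fin n)} (h : conGen (braidMonoidRel n) u v) :
    conGen (braidMonoidRel n) u.reverse v.reverse := by
  induction h with
  | of _ _ h =>
    rcases h with ⟨i, j, hij, rfl, rfl⟩ | ⟨i, j, hij, rfl, rfl⟩
    · simp only [FreeMonoid.reverse_mul, FreeMonoid.reverse_of]
      exact mk_eq_mk.1 (of_mul_of_comm (Or.inr hij))
    · simp only [FreeMonoid.reverse_mul, FreeMonoid.reverse_of, ← mul_assoc]
      exact mk_eq_mk.1 (of_braid (Or.inl hij))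
  | refl => exact (conGen _).refl _
  | symm _ ih => exact (conGen _).symm ih
  | trans _ _ ih₁ ih₂ => exact (conGen _).trans ih₁ ih₂
  | mul _ _ ih₁ ih₂ =>
    rw [FreeMonoid.reverse_mul, FreeMonoid.reverse_mul]
    exact (conGen _).mul ih₂ ih₁

theorem isLeftRegular (a : BraidMonoid n) : IsLeftRegular a := by
  induction a using induction_on with
  | one => exact fun x y h => by simpa using h
  | of_mul i a ih =>
    intro x y h
    simp only [mul_assoc] at h
    exact ih (throughLcm_self_iff.1 (throughLcm_of_of_mul_eq h))

theorem isRightRegular (a : BraidMonoid n) : IsRightRegular a := by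
  intro x y h
  induction a using Con.induction_on with
  | H w =>
    induction x using Con.induction_on with
    | H u =>
      induction y using Con.induction_on with
      | H v =>
        have h' := conGen_reverse (mk_eq_mk.1 h)
        rw [FreeMonoid.reverse_mul, FreeMonoid.reverse_mul, ← mk_eq_mk, map_mul, map_mul] at h'
        simpa using conGen_reverse (mk_eq_mk.1 (isLeftRegular _ h'))

instance : IsCancelMul (BraidMonoid n) where
  mul_left_cancel := isLeftRegular
  mul_right_cancel := isRightRegular

/-! ### The fundamental braid -/

-- `σₐ` for `a < n`; the junk value `1` beyond the range lets the indices below live in `ℕ`.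
def gen (n a : ℕ) : BraidMonoid n := if h : a < n then of ⟨a, h⟩ else 1

theorem gen_val (i : Fin n) : gen n i = of i := dif_pos i.isLt

theorem gen_left_comm {a b : ℕ} (h : a + 2 ≤ b) (x : BraidMonoid n) :
    gen n a * (gen n b * x) = gen n b * (gen n a * x) := by
  unfold gen
  split_ifs with ha hb hb
  · exact of_left_comm (Or.inl h) x
  all_goals simp

theorem gen_braid_mul {a : ℕ} (h : a + 1 < n) (x : BraidMonoid n) :
    gen n a * (gen n (a + 1) * (gen n a * x)) =
      gen n (a + 1) * (gen n a * (gen n (a + 1) * x)) := by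
  simp only [gen, dif_pos h, dif_pos (Nat.lt_of_succ_lt h)]
  exact of_braid_mul (Or.inl rfl) x

-- `desc n k = σ_{k-1} ⋯ σ₁ σ₀`, and `delta n n` is Garside's fundamental braid `Δ`.
def desc (n : ℕ) : ℕ → BraidMonoid n
  | 0 => 1
  | k + 1 => gen n k * desc n k

def delta (n : ℕ) : ℕ → BraidMonoid n
  | 0 => 1
  | k + 1 => delta n k * desc n (k + 1)

theorem gen_mul_desc_comm {b k : ℕ} (h : k + 1 ≤ b) : gen n b * desc n k = desc n k * gen n b := by
  induction k with
  | zero => simp [desc]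
  | succ k ih => rw [desc, ← gen_left_comm (by omega), ih (by omega), mul_assoc]

theorem gen_mul_desc {j k : ℕ} (h : j + 2 ≤ k) (hk : k ≤ n) :
    gen n j * desc n k = desc n k * gen n (j + 1) := by
  induction k with
  | zero => omega
  | succ k ih =>
    rw [desc, mul_assoc]
    rcases Nat.lt_or_ge (j + 2) (k + 1) with hjk | hjk
    · rw [gen_left_comm (by omega), ih (by omega) (by omega)]
    · obtain rfl : k = j + 1 := by omega
      rw [desc, gen_braid_mul (by omega), gen_mul_desc_comm le_rfl]
      simp only [mul_assoc]

theorem desc_mul_desc_succ (k : ℕ) :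
    desc n (k + 1) * desc n (k + 2) = gen n k * (gen n (k + 1) * (desc n k * desc n (k + 1))) := by
  show gen n k * desc n k * (gen n (k + 1) * desc n (k + 1)) = _
  rw [mul_assoc, ← mul_assoc (desc n k), ← gen_mul_desc_comm le_rfl, mul_assoc]

theorem gen_mul_desc_mul_desc {k : ℕ} (hk : k < n) :
    gen n k * (desc n k * desc n (k + 1)) = desc n k * (desc n (k + 1) * gen n 0) := by
  induction k with
  | zero => simp [desc]
  | succ k ih =>
    rw [desc_mul_desc_succ, ← gen_braid_mul hk, ih (by omega), ← mul_assoc (desc n (k + 1)),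
      desc_mul_desc_succ]
    simp only [mul_assoc]

theorem gen_mul_delta_comm {b k : ℕ} (h : k + 1 ≤ b) :
    gen n b * delta n k = delta n k * gen n b := by
  induction k with
  | zero => simp [delta]
  | succ k ih => rw [delta, ← mul_assoc, ih (by omega), mul_assoc, gen_mul_desc_comm h, mul_assoc]

theorem delta_succ_mul_gen_zero {k : ℕ} (hk : k < n) :
    delta n (k + 1) * gen n 0 = gen n k * delta n (k + 1) := by
  cases k with
  | zero => simp [delta, desc]
  | succ k =>
    simp only [delta, mul_assoc]
    rw [← gen_mul_desc_mul_desc hk, ← mul_assoc, ← gen_mul_delta_comm le_rfl, mul_assoc]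

theorem delta_mul_gen {j k : ℕ} (hj : j < k) (hk : k ≤ n) :
    delta n k * gen n j = gen n (k - 1 - j) * delta n k := by
  induction k generalizing j with
  | zero => omega
  | succ k ih =>
    cases j with
    | zero => simpa using delta_succ_mul_gen_zero (by omega)
    | succ j =>
      rw [delta, mul_assoc, ← gen_mul_desc (by omega) hk, ← mul_assoc, ih (by omega) (by omega),
        mul_assoc]
      congr 2
      omega

theorem exists_desc_succ_eq_mul_gen_zero (k : ℕ) : ∃ e, desc n (k + 1) = e * gen n 0 := by
  induction k with
  | zero => exact ⟨1, by simp [desc]⟩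
  | succ k ih =>
    obtain ⟨e, he⟩ := ih
    exact ⟨gen n (k + 1) * e, by rw [desc, he, mul_assoc]⟩

theorem exists_delta_eq_mul_gen {j k : ℕ} (hj : j < k) (hk : k ≤ n) :
    ∃ d, delta n k = d * gen n j := by
  induction k generalizing j with
  | zero => omega
  | succ k ih =>
    cases j with
    | zero =>
      obtain ⟨e, he⟩ := exists_desc_succ_eq_mul_gen_zero (n := n) k
      exact ⟨delta n k * e, by rw [delta, he, mul_assoc]⟩
    | succ j =>
      obtain ⟨d, hd⟩ := ih (j := j) (by omega) (by omega)
      refine ⟨d * desc n (k + 1), ?_⟩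
      rw [delta, hd, mul_assoc, gen_mul_desc (by omega) hk, mul_assoc]

theorem delta_mul_of (i : Fin n) : delta n n * of i = of i.rev * delta n n := by
  rw [← gen_val, ← gen_val, delta_mul_gen i.isLt le_rfl, Fin.val_rev]
  congr 2
  omega

theorem exists_delta_mul_eq (x : BraidMonoid n) : ∃ x', delta n n * x = x' * delta n n := by
  induction x using induction_on with
  | one => exact ⟨1, by simp⟩
  | of_mul i x ih =>
    obtain ⟨x', hx'⟩ := ih
    exact ⟨of i.rev * x', by rw [← mul_assoc, delta_mul_of, mul_assoc, hx', mul_assoc]⟩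

theorem exists_mul_eq_delta_pow (x : BraidMonoid n) : ∃ c, c * x = delta n n ^ length x := by
  induction x using induction_on with
  | one => exact ⟨1, by simp⟩
  | of_mul i x ih =>
    obtain ⟨c, hc⟩ := ih
    obtain ⟨c', hc'⟩ := exists_delta_mul_eq c
    obtain ⟨d, hd⟩ := exists_delta_eq_mul_gen i.isLt le_rfl
    refine ⟨c' * d, ?_⟩
    calc c' * d * (of i * x) = c' * delta n n * x := by rw [hd, gen_val]; simp only [mul_assoc]
      _ = delta n n * (c * x) := by rw [← hc', mul_assoc]
      _ = delta n n ^ length (of i * x) := by rw [hc, length_mul, length_of, add_comm, pow_succ']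

theorem exists_mul_eq_mul (x y : BraidMonoid n) : ∃ a b, a * x = b * y := by
  obtain ⟨c, hc⟩ := exists_mul_eq_delta_pow x
  obtain ⟨c', hc'⟩ := exists_mul_eq_delta_pow y
  refine ⟨delta n n ^ length y * c, delta n n ^ length x * c', ?_⟩
  rw [mul_assoc, hc, mul_assoc, hc', ← pow_add, ← pow_add, add_comm]

/-! ### Embedding into the braid group -/

open OreLocalization

noncomputable instance : OreSet (⊤ : Submonoid (BraidMonoid n)) where
  ore_right_cancel _ _ _ h := ⟨1, by rw [mul_right_cancel h]⟩
  oreNum r s := (exists_mul_eq_mul r s).choose_spec.choose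
  oreDenom r s := ⟨(exists_mul_eq_mul r s).choose, Submonoid.mem_top _⟩
  ore_eq r s := (exists_mul_eq_mul r s).choose_spec.choose_spec

noncomputable def toFractionUnits :
    BraidMonoid n →* (OreLocalization (⊤ : Submonoid (BraidMonoid n)) (BraidMonoid n))ˣ :=
  IsUnit.liftRight numeratorHom fun x => numerator_isUnit ⟨x, Submonoid.mem_top x⟩

theorem toFractionUnits_injective : Function.Injective (toFractionUnits (n := n)) := by
  intro x y h
  have h' := congrArg Units.val h
  simp only [toFractionUnits, IsUnit.coe_liftRight, numeratorHom_apply, oreDiv_eq_iff] at h'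
  obtain ⟨u, v, huv, hu⟩ := h'
  simp only [OneMemClass.coe_one, mul_one] at hu
  rw [Submonoid.smul_def, hu, smul_eq_mul, smul_eq_mul] at huv
  exact (mul_left_cancel huv).symm

theorem lift_of_braidRels_eq_one {G : Type*} [Group G] (f : BraidMonoid n →* G) :
    ∀ r ∈ braidRels n, FreeGroup.lift (fun i => f (of i)) r = 1 := by
  rintro r (⟨i, j, hij, rfl⟩ | ⟨i, j, hij, rfl⟩) <;>
    simp only [map_mul, map_inv, FreeGroup.lift_apply_of, mul_inv_eq_one]
  · simp only [← map_mul, of_mul_of_comm (Or.inl hij)]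
  · simp only [← map_mul, of_braid (Or.inl hij)]

noncomputable def fromBraidGroup :
    BraidGroup n →* (OreLocalization (⊤ : Submonoid (BraidMonoid n)) (BraidMonoid n))ˣ :=
  PresentedGroup.toGroup (lift_of_braidRels_eq_one toFractionUnits)

theorem braidMonoidRel_le_ker :
    braidMonoidRel n ≤ Con.ker (FreeMonoid.lift fun i : Fin n => σ i) := by
  rintro _ _ (⟨i, j, hij, rfl, rfl⟩ | ⟨i, j, hij, rfl, rfl⟩) <;>
    simp only [Con.ker_rel, map_mul, FreeMonoid.lift_eval_of]
  · have := PresentedGroup.mk_eq_mk_of_mul_inv_mem (rels := braidRels n)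
      (x := .of i * .of j) (y := .of j * .of i) (Or.inl ⟨i, j, hij, rfl⟩)
    rwa [map_mul, map_mul] at this
  · have := PresentedGroup.mk_eq_mk_of_mul_inv_mem (rels := braidRels n)
      (x := .of i * .of j * .of i) (y := .of j * .of i * .of j) (Or.inr ⟨i, j, hij, rfl⟩)
    rwa [map_mul, map_mul, map_mul, map_mul] at this

def toBraidGroup : BraidMonoid n →* BraidGroup n :=
  Con.lift _ (FreeMonoid.lift fun i => σ i) (Con.conGen_le.2 braidMonoidRel_le_ker)

theorem toBraidGroup_mk (w : FreeMonoid (Fin n)) :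
    toBraidGroup (mk w) = FreeMonoid.lift (fun i => σ i) w := rfl

theorem fromBraidGroup_toBraidGroup (x : BraidMonoid n) :
    fromBraidGroup (toBraidGroup x) = toFractionUnits x := by
  have : fromBraidGroup.comp toBraidGroup = toFractionUnits (n := n) :=
    Con.hom_ext (FreeMonoid.hom_eq fun _ =>
      PresentedGroup.toGroup.of (lift_of_braidRels_eq_one toFractionUnits))
  exact DFunLike.congr_fun this x

theorem toBraidGroup_injective : Function.Injective (toBraidGroup (n := n)) := fun x y h =>
  toFractionUnits_injective (by rw [← fromBraidGroup_toBraidGroup, h, fromBraidGroup_toBraidGroup])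

end BraidMonoid

theorem garside_word_problem_general {n : ℕ} (w w' : FreeMonoid (Fin (n - 1))) :
    FreeMonoid.lift (fun i => σ i) w = FreeMonoid.lift (fun i => σ i) w' ↔
      conGen (braidMonoidRel (n - 1)) w w' := by
  rw [← BraidMonoid.toBraidGroup_mk, ← BraidMonoid.toBraidGroup_mk,
    BraidMonoid.toBraidGroup_injective.eq_iff, BraidMonoid.mk_eq_mk]

/-- (Garside) Two positive words in the Artin generators represent the same
element of the braid group `Bₙ` iff they are identified by the monoid
congruence generated by the commutation and triple relations, i.e. iff they are
connected by a finite sequence of single applications of these relations. -/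
theorem garside_word_problem {n : ℕ} (hn : 2 ≤ n) (w w' : FreeMonoid (Fin (n - 1))) :
    FreeMonoid.lift (fun i => σ i) w = FreeMonoid.lift (fun i => σ i) w' ↔
      conGen (braidMonoidRel (n - 1)) w w' :=
  garside_word_problem_general w w'
end

section
/- Let n ≥ 2 and let σ_1,…,σ_{n−1} be the standard Artin generators of B_n. For every i with 1 < i ≤ n−1, the (n)-tuple (σ_i, σ_1, σ_2, …, σ_{n−1}) in (B_n)^n is Hurwitz equivalent to the n-tuple (σ_1, σ_2, …, σ_{n−1}, σ_{i−1}). -/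
/-!
Moving the head `c` of a tuple `(c, t₁, …, tₘ)` to the end by `m` inverse Hurwitz moves
`(c, b, …) ↦ (b, b⁻¹ c b, …)` conjugates it by the product `Π = t₁ ⋯ tₘ`, giving
`(t₁, …, tₘ, Π⁻¹ c Π)`. For the Artin generators, `Δ = σ₁ ⋯ σₙ₋₁` satisfies `Δ⁻¹ σᵢ Δ = σᵢ₋₁`:
`σᵢ` commutes with `σ₁, …, σᵢ₋₂`, the braid relation turns `σᵢ (σᵢ₋₁ σᵢ)` into `(σᵢ₋₁ σᵢ) σᵢ₋₁`,
and `σᵢ₋₁` commutes with `σᵢ₊₁, …, σₙ₋₁`.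
-/

section Hurwitz

variable {G : Type*} [Group G]

theorem HurwitzMove.cons (x : G) {l l' : List G} (h : HurwitzMove l l') :
    HurwitzMove (x :: l) (x :: l') := by
  obtain ⟨u, v, a, b, rfl, rfl⟩ := h
  exact ⟨x :: u, v, a, b, rfl, rfl⟩

theorem HurwitzEquiv.cons (x : G) {l l' : List G} (h : HurwitzEquiv l l') :
    HurwitzEquiv (x :: l) (x :: l') := by
  induction h with
  | rel _ _ hmove => exact .rel _ _ (hmove.cons x)
  | refl => exact .refl _
  | symm _ _ _ ih => exact .symm _ _ ih
  | trans _ _ _ _ _ ih₁ ih₂ => exact .trans _ _ _ ih₁ ih₂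

theorem hurwitzEquiv_cons_append_conj (c : G) (l : List G) :
    HurwitzEquiv (c :: l) (l ++ [l.prod⁻¹ * c * l.prod]) := by
  induction l generalizing c with
  | nil =>
    simp only [List.prod_nil, inv_one, mul_one, one_mul, List.nil_append]
    exact .refl _
  | cons b l ih =>
    have hmove : HurwitzMove (b :: (b⁻¹ * c * b) :: l) (c :: b :: l) :=
      ⟨[], l, b, b⁻¹ * c * b, rfl, by simp [mul_assoc]⟩
    have hconj : l.prod⁻¹ * (b⁻¹ * c * b) * l.prod = (b :: l).prod⁻¹ * c * (b :: l).prod := by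
      simp only [List.prod_cons, mul_inv_rev, mul_assoc]
    have hrest := (ih (b⁻¹ * c * b)).cons b
    rw [hconj] at hrest
    exact .trans _ _ _ (.symm _ _ (.rel _ _ hmove)) hrest

theorem HurwitzEquiv.cons_append_of_mul_prod_eq {c d : G} {l : List G}
    (h : c * l.prod = l.prod * d) : HurwitzEquiv (c :: l) (l ++ [d]) := by
  simpa only [mul_assoc, h, inv_mul_cancel_left] using hurwitzEquiv_cons_append_conj c l

theorem mul_prod_append_cons_cons {x y a b : G} {l₁ l₂ : List G}
    (h₁ : ∀ z ∈ l₁, Commute x z) (hab : x * (a * b) = a * b * y) (h₂ : ∀ z ∈ l₂, Commute y z) :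
    x * (l₁ ++ a :: b :: l₂).prod = (l₁ ++ a :: b :: l₂).prod * y := by
  have hx := (Commute.list_prod_right l₁ x h₁).eq
  have hy := (Commute.list_prod_right l₂ y h₂).eq
  simp only [List.prod_append, List.prod_cons, ← mul_assoc a b]
  calc x * (l₁.prod * (a * b * l₂.prod)) = l₁.prod * (x * (a * b)) * l₂.prod := by
        rw [← mul_assoc, hx]; group
    _ = l₁.prod * (a * b * l₂.prod) * y := by rw [hab]; simp only [mul_assoc, hy]

end Hurwitz

section Braid

variable {m : ℕ}

theorem σ_commute {a b : Fin m} (h : a.val + 2 ≤ b.val) : Commute (σ a) (σ b) :=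
  PresentedGroup.mk_eq_mk_of_mul_inv_mem (Or.inl ⟨a, b, h, rfl⟩)

theorem σ_braid {a b : Fin m} (h : a.val + 1 = b.val) :
    σ a * σ b * σ a = σ b * σ a * σ b :=
  PresentedGroup.mk_eq_mk_of_mul_inv_mem (Or.inr ⟨a, b, h, rfl⟩)

theorem σ_mul_prod_ofFn_σ {i j : Fin m} (hij : j.val + 1 = i.val) :
    σ i * (List.ofFn σ).prod = (List.ofFn σ).prod * σ j := by
  set L := List.ofFn (σ : Fin m → BraidGroup m)
  have hsplit : L.take j ++ σ j :: σ i :: L.drop (i + 1) = L := by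
    have hj : j.val < L.length := by simp [L]
    have hi : j.val + 1 < L.length := by simp only [List.length_ofFn, L]; omega
    conv_rhs => rw [← L.take_append_drop j, List.drop_eq_getElem_cons hj,
      List.drop_eq_getElem_cons hi]
    simp [L, hij]
  rw [← hsplit]
  refine mul_prod_append_cons_cons ?_ (by rw [← mul_assoc, σ_braid hij]) ?_
  · intro z hz
    obtain ⟨k, hk, rfl⟩ := List.mem_take_iff_getElem.mp hz
    rw [List.getElem_ofFn]
    exact (σ_commute (by simp only [lt_inf_iff] at hk ⊢; omega)).symm
  · intro z hz
    obtain ⟨k, hk, rfl⟩ := List.mem_drop_iff_getElem.mp hz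
    rw [List.getElem_ofFn]
    exact σ_commute (by dsimp only; omega)

end Braid

theorem hurwitz_move_gen_through_pi_general {n : ℕ}
    (i j : Fin (n - 1)) (hij : j.val + 1 = i.val) :
    HurwitzEquiv (σ i :: List.ofFn (fun k : Fin (n - 1) => σ k))
      (List.ofFn (fun k : Fin (n - 1) => σ k) ++ [σ j]) :=
  .cons_append_of_mul_prod_eq (σ_mul_prod_ofFn_σ hij)

/-- For `1 < i ≤ n - 1` (in the paper's one-based indexing; here zero-based,
so `j + 1 = i`), the tuple `(σᵢ, σ₁, …, σₙ₋₁)` is Hurwitz equivalent to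
`(σ₁, …, σₙ₋₁, σᵢ₋₁)`. -/
theorem hurwitz_move_gen_through_pi {n : ℕ} (hn : 2 ≤ n)
    (i j : Fin (n - 1)) (hij : j.val + 1 = i.val) :
    HurwitzEquiv (σ i :: List.ofFn (fun k : Fin (n - 1) => σ k))
      (List.ofFn (fun k : Fin (n - 1) => σ k) ++ [σ j]) :=
  hurwitz_move_gen_through_pi_general i j hij
end

section
/- Let n ≥ 2 and let σ_1,…,σ_{n−1} be the standard Artin generators of B_n. Then the (2n−1)-tuple (σ_1, σ_1, σ_2, …, σ_{n−1}, σ_1, σ_2, …, σ_{n−1}) in (B_n)^{2n−1} (i.e. σ_1 followed by two copies of the sequence σ_1,…,σ_{n−1}) is Hurwitz equivalent to the (2n−1)-tuple (σ_1, σ_2, …, σ_{n−1}, σ_1, σ_2, …, σ_{n−1}, σ_{n−1}) (two copies of the sequence σ_1,…,σ_{n−1} followed by σ_{n−1}). -/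
lemma hurwitzEquiv_append_cons {G : Type*} [Group G] (u : List G) (x : G) (t : List G) :
    HurwitzEquiv (u ++ x :: t) (u ++ t ++ [t.prod⁻¹ * x * t.prod]) := by
  unfold HurwitzEquiv
  induction t generalizing u x with
  | nil => simpa using Relation.EqvGen.refl _
  | cons a s ih =>
    have pass : HurwitzMove (u ++ a :: (a⁻¹ * x * a) :: s) (u ++ x :: a :: s) :=
      ⟨u, s, a, a⁻¹ * x * a, rfl, by group⟩
    have rest := ih (u ++ [a]) (a⁻¹ * x * a)
    simp only [List.append_assoc, List.singleton_append] at rest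
    simpa [mul_assoc] using (Relation.EqvGen.rel _ _ pass).symm.trans _ _ _ rest

namespace BraidGroup

variable {m : ℕ}

/-- The Artin generators indexed by `ℕ`, with the junk value `1` at indices `≥ m`. -/
def gen (i : ℕ) : BraidGroup m := if h : i < m then σ ⟨i, h⟩ else 1

lemma gen_mul_gen_comm {i j : ℕ} (h : i + 2 ≤ j) :
    (gen i : BraidGroup m) * gen j = gen j * gen i := by
  unfold gen
  split_ifs with hi hj hj <;> try simp
  exact PresentedGroup.mk_eq_mk_of_mul_inv_mem (Or.inl ⟨⟨i, hi⟩, ⟨j, hj⟩, h, rfl⟩)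

lemma gen_braid {i : ℕ} (h : i + 1 < m) :
    (gen i : BraidGroup m) * gen (i + 1) * gen i = gen (i + 1) * gen i * gen (i + 1) := by
  simp only [gen, dif_pos h, dif_pos (by omega : i < m)]
  exact PresentedGroup.mk_eq_mk_of_mul_inv_mem (Or.inr ⟨⟨i, _⟩, ⟨i + 1, h⟩, rfl, rfl⟩)

lemma gen_of_lt {i : ℕ} (h : i < m) : (gen i : BraidGroup m) = σ ⟨i, h⟩ := dif_pos h

def delta (k : ℕ) : BraidGroup m := ((List.range k).map gen).prod

lemma delta_succ (k : ℕ) : (delta (k + 1) : BraidGroup m) = delta k * gen k :=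
  List.prod_range_succ _ _

lemma gen_mul_delta_comm {j k : ℕ} (h : k + 1 ≤ j) :
    (gen j : BraidGroup m) * delta k = delta k * gen j := by
  induction k with
  | zero => simp [delta]
  | succ k ih =>
    rw [delta_succ, ← mul_assoc, ih (by omega), mul_assoc, ← gen_mul_gen_comm h, mul_assoc]

lemma delta_sq_succ_succ {k : ℕ} (h : k + 1 < m) :
    (delta (k + 2) * delta (k + 2) : BraidGroup m) =
      delta (k + 1) * delta (k + 1) * gen (k + 1) * gen k := by
  calc (delta (k + 2) * delta (k + 2) : BraidGroup m)
      = delta (k + 1) * (gen (k + 1) * delta k) * gen k * gen (k + 1) := by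
        simp only [delta_succ, mul_assoc]
    _ = delta (k + 1) * delta k * (gen (k + 1) * gen k * gen (k + 1)) := by
        rw [gen_mul_delta_comm le_rfl]; group
    _ = delta (k + 1) * delta (k + 1) * gen (k + 1) * gen k := by
        rw [← gen_braid h, delta_succ k]; group

lemma gen_zero_mul_delta_sq {k : ℕ} (h : k < m) :
    (gen 0 * (delta (k + 1) * delta (k + 1)) : BraidGroup m) =
      delta (k + 1) * delta (k + 1) * gen k := by
  induction k with
  | zero => simp [delta, mul_assoc]
  | succ k ih =>
    calc (gen 0 * (delta (k + 2) * delta (k + 2)) : BraidGroup m)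
        = gen 0 * (delta (k + 1) * delta (k + 1)) * gen (k + 1) * gen k := by
          rw [delta_sq_succ_succ h]; group
      _ = delta (k + 1) * delta (k + 1) * (gen k * gen (k + 1) * gen k) := by
          rw [ih (by omega)]; group
      _ = delta (k + 2) * delta (k + 2) * gen (k + 1) := by
          rw [gen_braid h, delta_sq_succ_succ h]; group

lemma prod_ofFn_σ : (List.ofFn fun k : Fin m => σ k).prod = delta m := by
  refine congrArg List.prod (List.ext_getElem (by simp) fun i hi _ => ?_)
  simp [gen, (by simpa using hi : i < m)]

end BraidGroup

open BraidGroup in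
/-- `(σ₁, σ₁, …, σₙ₋₁, σ₁, …, σₙ₋₁)` is Hurwitz equivalent to
`(σ₁, …, σₙ₋₁, σ₁, …, σₙ₋₁, σₙ₋₁)` (zero-based: `σ₁ = σ 0`,
`σₙ₋₁ = σ (n - 2)`). -/
theorem hurwitz_move_first_gen_through_pi_sq {n : ℕ} (hn : 2 ≤ n) :
    HurwitzEquiv
      (σ (⟨0, by omega⟩ : Fin (n - 1)) ::
        (List.ofFn (fun k : Fin (n - 1) => σ k) ++ List.ofFn (fun k : Fin (n - 1) => σ k)))
      ((List.ofFn (fun k : Fin (n - 1) => σ k) ++ List.ofFn (fun k : Fin (n - 1) => σ k)) ++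
        [σ (⟨n - 2, by omega⟩ : Fin (n - 1))]) := by
  set L : List (BraidGroup (n - 1)) := List.ofFn fun k => σ k
  have key := gen_zero_mul_delta_sq (m := n - 1) (k := n - 2) (by omega)
  rw [show n - 2 + 1 = n - 1 by omega] at key
  have hconj : (L ++ L).prod⁻¹ * σ ⟨0, by omega⟩ * (L ++ L).prod = σ ⟨n - 2, by omega⟩ := by
    rw [List.prod_append, prod_ofFn_σ, ← gen_of_lt, ← gen_of_lt, mul_assoc, key,
      inv_mul_cancel_left]
  simpa only [List.nil_append, hconj] using hurwitzEquiv_append_cons [] (σ ⟨0, by omega⟩) (L ++ L)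
end

section
/- Let n ≥ 2 and let σ_1,…,σ_{n−1} be the standard Artin generators of B_n. For every j with 1 ≤ j ≤ n−1, the n(n−1)-tuple consisting of n consecutive copies of the sequence (σ_1, σ_2, …, σ_{n−1}) is Hurwitz equivalent to the n(n−1)-tuple consisting of n consecutive copies of the sequence (σ_j σ_1 σ_j⁻¹, σ_j σ_2 σ_j⁻¹, …, σ_j σ_{n−1} σ_j⁻¹). (Both are factorizations of Δ_n² = (σ_1⋯σ_{n−1})^n, since Δ_n² is central.) -/
/-!
Write `δ = (σ₁, …, σₙ₋₁)`, so that both tuples are `δⁿ` and its conjugate by `σⱼ`. The braid and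
commutation relations give `δ σᵢ ∼ σᵢ₊₁ δ`, so a block of letters slides across a copy of `δ` with
its indices shifted by one; an induction built on this shows that rotating `δⁿ` cyclically by
`k < n` letters gives a Hurwitz equivalent tuple. Hence `δⁿ` is equivalent both to some `σⱼ :: A`
and to its rotation `A ++ [σⱼ]`. Pushing `σⱼ` through `A` turns `σⱼ :: A` into
`σⱼ A σⱼ⁻¹ ++ [σⱼ]`, the conjugate of `A ++ [σⱼ]` by `σⱼ`; as conjugation preserves Hurwitz
equivalence, `δⁿ ∼ σⱼ δⁿ σⱼ⁻¹`.
-/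

infix:50 " ∼ₕ " => HurwitzEquiv

namespace HurwitzEquiv

variable {G H : Type*} [Group G] [Group H]

@[refl, simp]
theorem refl (l : List G) : l ∼ₕ l := Relation.EqvGen.refl l

theorem symm {l l' : List G} (h : l ∼ₕ l') : l' ∼ₕ l :=
  Relation.EqvGen.symm _ _ h

theorem trans {l l' l'' : List G} (h : l ∼ₕ l') (h' : l' ∼ₕ l'') : l ∼ₕ l'' :=
  Relation.EqvGen.trans _ _ _ h h'

theorem of_move {l l' : List G} (h : HurwitzMove l l') : l ∼ₕ l' := Relation.EqvGen.rel _ _ h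

theorem map_of_move {f : List G → List H}
    (hf : ∀ l l', HurwitzMove l l' → HurwitzMove (f l) (f l')) {l l' : List G}
    (h : l ∼ₕ l') : f l ∼ₕ f l' := by
  induction h with
  | rel _ _ hm => exact of_move (hf _ _ hm)
  | refl => rfl
  | symm _ _ _ ih => exact ih.symm
  | trans _ _ _ _ _ ih ih' => exact ih.trans ih'

theorem append_left (u : List G) {l l' : List G} (h : l ∼ₕ l') : u ++ l ∼ₕ u ++ l' := by
  refine map_of_move (f := (u ++ ·))
    (fun l l' ⟨w, v, a, b, hl, hl'⟩ => ⟨u ++ w, v, a, b, ?_, ?_⟩) h <;>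
    simp [hl, hl']

theorem append_right (w : List G) {l l' : List G} (h : l ∼ₕ l') : l ++ w ∼ₕ l' ++ w := by
  refine map_of_move (f := (· ++ w))
    (fun l l' ⟨u, v, a, b, hl, hl'⟩ => ⟨u, v ++ w, a, b, ?_, ?_⟩) h <;>
    simp [hl, hl']

theorem append {l₁ l₁' l₂ l₂' : List G} (h₁ : l₁ ∼ₕ l₁') (h₂ : l₂ ∼ₕ l₂') :
    l₁ ++ l₂ ∼ₕ l₁' ++ l₂' :=
  (h₁.append_right l₂).trans (h₂.append_left l₁')

theorem map {F : Type*} [FunLike F G H] [MonoidHomClass F G H] (f : F) {l l' : List G}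
    (h : l ∼ₕ l') : l.map f ∼ₕ l'.map f := by
  refine map_of_move (f := List.map f) (fun l l' ⟨u, v, a, b, hl, hl'⟩ =>
    ⟨u.map f, v.map f, f a, f b, ?_, ?_⟩) h <;> simp [hl, hl']

instance : Trans (α := List G) HurwitzEquiv HurwitzEquiv HurwitzEquiv := ⟨trans⟩

end HurwitzEquiv

section Group

variable {G : Type*} [Group G]

theorem hurwitzEquiv_cons_cons_of_commute {a b : G} (h : Commute a b) (v : List G) :
    a :: b :: v ∼ₕ b :: a :: v := by
  have hm : HurwitzMove (a :: b :: v) ((a * b * a⁻¹) :: a :: v) := ⟨[], v, a, b, rfl, rfl⟩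
  rw [h.eq, mul_inv_cancel_right] at hm
  exact .of_move hm

theorem hurwitzEquiv_braid {a b : G} (h : a * b * a = b * a * b) (v : List G) :
    a :: b :: a :: v ∼ₕ b :: a :: b :: v := by
  have hm₁ : HurwitzMove (a :: b :: a :: v) (a :: (b * a * b⁻¹) :: b :: v) :=
    ⟨[a], v, b, a, rfl, rfl⟩
  have hm₂ : HurwitzMove (a :: (b * a * b⁻¹) :: b :: v)
      ((a * (b * a * b⁻¹) * a⁻¹) :: a :: b :: v) := ⟨[], b :: v, a, _, rfl, rfl⟩
  have hconj : a * (b * a * b⁻¹) * a⁻¹ = b := by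
    calc a * (b * a * b⁻¹) * a⁻¹ = a * b * a * b⁻¹ * a⁻¹ := by group
      _ = b := by rw [h]; group
  rw [hconj] at hm₂
  exact (HurwitzEquiv.of_move hm₁).trans (.of_move hm₂)

theorem hurwitzEquiv_append_singleton_of_commute {a : G} {u : List G}
    (h : ∀ x ∈ u, Commute a x) : u ++ [a] ∼ₕ a :: u := by
  induction u with
  | nil => rfl
  | cons x u ih =>
    exact (ih fun y hy => h y (.tail _ hy)).append_left [x] |>.trans
      (hurwitzEquiv_cons_cons_of_commute (h x (.head _)).symm u)

theorem hurwitzEquiv_cons_map_conj (a : G) (A : List G) :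
    a :: A ∼ₕ A.map (MulAut.conj a) ++ [a] := by
  induction A with
  | nil => rfl
  | cons x A ih =>
    have hm : HurwitzMove (a :: x :: A) (MulAut.conj a x :: a :: A) := ⟨[], A, a, x, rfl, rfl⟩
    exact (HurwitzEquiv.of_move hm).trans (ih.append_left [_])

theorem hurwitzEquiv_map_conj_of_cons_of_append {T A : List G} {a : G}
    (hcons : T ∼ₕ a :: A) (happend : T ∼ₕ A ++ [a]) : T ∼ₕ T.map (MulAut.conj a) := by
  have hconj := happend.map (MulAut.conj a)
  simp only [List.map_append, List.map_singleton, MulAut.conj_apply, mul_inv_cancel_right]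
    at hconj
  exact (hcons.trans (hurwitzEquiv_cons_map_conj a A)).trans hconj.symm

end Group

section Blocks

variable {α : Type*} (g : ℕ → α) (m : ℕ)

def block (a k : ℕ) : List α := (List.range' a k).map g

def coxeterWord : List α := block g 0 m

def coxeterPow (p : ℕ) : List α := (List.replicate p (coxeterWord g m)).flatten

@[simp]
theorem block_zero (a : ℕ) : block g a 0 = [] := rfl

theorem block_succ (a k : ℕ) : block g a (k + 1) = g a :: block g (a + 1) k := rfl

theorem block_succ' (a k : ℕ) : block g a (k + 1) = block g a k ++ [g (a + k)] := by
  simp [block, List.range'_1_concat]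

theorem block_append (a k l : ℕ) : block g a k ++ block g (a + k) l = block g a (k + l) := by
  simp only [block, ← List.map_append, List.range'_append_1]

theorem mem_block {g : ℕ → α} {a k : ℕ} {x : α} :
    x ∈ block g a k ↔ ∃ i, a ≤ i ∧ i < a + k ∧ g i = x := by
  simp [block, List.mem_range'_1, and_assoc]

theorem coxeterPow_succ (p : ℕ) :
    coxeterPow g m (p + 1) = coxeterPow g m p ++ coxeterWord g m := by
  simp [coxeterPow, List.replicate_succ']

theorem coxeterPow_add (p q : ℕ) :
    coxeterPow g m (p + q) = coxeterPow g m p ++ coxeterPow g m q := by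
  simp only [coxeterPow, List.replicate_add, List.flatten_append]

end Blocks

structure IsBraidFamily {G : Type*} [Group G] (g : ℕ → G) (m : ℕ) : Prop where
  commute : ∀ i j, i + 2 ≤ j → j < m → Commute (g i) (g j)
  braid : ∀ i, i + 1 < m → g i * g (i + 1) * g i = g (i + 1) * g i * g (i + 1)

namespace IsBraidFamily

variable {G : Type*} [Group G] {g : ℕ → G} {m : ℕ} (hg : IsBraidFamily g m)
include hg

theorem coxeterWord_append_singleton_hurwitzEquiv {i : ℕ} (hi : i + 1 < m) :
    coxeterWord g m ++ [g i] ∼ₕ g (i + 1) :: coxeterWord g m := by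
  obtain ⟨t, rfl⟩ : ∃ t, m = i + 2 + t := ⟨m - (i + 2), by omega⟩
  have hsplit :
      coxeterWord g (i + 2 + t) = block g 0 i ++ g i :: g (i + 1) :: block g (i + 2) t := by
    rw [coxeterWord, ← block_append g 0 (i + 2), ← block_append g 0 i 2]
    simp [block, List.range'_succ]
  have hright : block g (i + 2) t ++ [g i] ∼ₕ g i :: block g (i + 2) t :=
    hurwitzEquiv_append_singleton_of_commute fun x hx => by
      obtain ⟨k, hk, hk', rfl⟩ := mem_block.mp hx
      exact hg.commute i k hk (by omega)
  have hleft : block g 0 i ++ [g (i + 1)] ∼ₕ g (i + 1) :: block g 0 i :=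
    hurwitzEquiv_append_singleton_of_commute fun x hx => by
      obtain ⟨k, -, hk, rfl⟩ := mem_block.mp hx
      exact (hg.commute k (i + 1) (by omega) (by omega)).symm
  calc coxeterWord g (i + 2 + t) ++ [g i]
      = block g 0 i ++ g i :: g (i + 1) :: (block g (i + 2) t ++ [g i]) := by simp [hsplit]
    _ ∼ₕ block g 0 i ++ g i :: g (i + 1) :: g i :: block g (i + 2) t := by
      simpa using hright.append_left (block g 0 i ++ [g i, g (i + 1)])
    _ ∼ₕ block g 0 i ++ g (i + 1) :: g i :: g (i + 1) :: block g (i + 2) t :=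
      (hurwitzEquiv_braid (hg.braid i hi) _).append_left _
    _ = (block g 0 i ++ [g (i + 1)]) ++ g i :: g (i + 1) :: block g (i + 2) t := by simp
    _ ∼ₕ g (i + 1) :: coxeterWord g (i + 2 + t) := by
      rw [hsplit]; exact hleft.append_right _

theorem block_append_coxeterWord_hurwitzEquiv {a k : ℕ} (h : a + 1 + k ≤ m) :
    block g (a + 1) k ++ coxeterWord g m ∼ₕ coxeterWord g m ++ block g a k := by
  induction k with
  | zero => simp
  | succ k ih =>
    have hletter : [g (a + 1 + k)] ++ coxeterWord g m ∼ₕ coxeterWord g m ++ [g (a + k)] := by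
      rw [show a + 1 + k = a + k + 1 by omega]
      exact (hg.coxeterWord_append_singleton_hurwitzEquiv (by omega)).symm
    calc block g (a + 1) (k + 1) ++ coxeterWord g m
        = block g (a + 1) k ++ ([g (a + 1 + k)] ++ coxeterWord g m) := by simp [block_succ']
      _ ∼ₕ (block g (a + 1) k ++ coxeterWord g m) ++ [g (a + k)] := by
        simpa using hletter.append_left (block g (a + 1) k)
      _ ∼ₕ (coxeterWord g m ++ block g a k) ++ [g (a + k)] := (ih (by omega)).append_right _
      _ = coxeterWord g m ++ block g a (k + 1) := by simp [block_succ']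

theorem block_append_coxeterPow_hurwitzEquiv {a p k : ℕ} (h : a + p + k ≤ m) :
    block g (a + p) k ++ coxeterPow g m p ∼ₕ coxeterPow g m p ++ block g a k := by
  induction p generalizing a with
  | zero => simp [coxeterPow]
  | succ p ih =>
    calc block g (a + (p + 1)) k ++ coxeterPow g m (p + 1)
        = (block g (a + 1 + p) k ++ coxeterPow g m p) ++ coxeterWord g m := by
          simp [coxeterPow_succ, Nat.add_right_comm, Nat.add_assoc]
      _ ∼ₕ coxeterPow g m p ++ (block g (a + 1) k ++ coxeterWord g m) := by
        simpa using (ih (a := a + 1) (by omega)).append_right (coxeterWord g m)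
      _ ∼ₕ coxeterPow g m p ++ (coxeterWord g m ++ block g a k) :=
        (hg.block_append_coxeterWord_hurwitzEquiv (by omega)).append_left _
      _ = coxeterPow g m (p + 1) ++ block g a k := by simp [coxeterPow_succ]

theorem coxeterPow_succ_hurwitzEquiv {q r : ℕ} (h : q + r = m) :
    coxeterPow g m (q + 1) ∼ₕ block g 0 q ++ coxeterPow g m q ++ block g 0 r := by
  induction q generalizing r with
  | zero => simp [coxeterPow, coxeterWord, ← h]
  | succ q ih =>
    have hletter : coxeterPow g m q ++ [g 0] ∼ₕ [g q] ++ coxeterPow g m q := by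
      simpa [block] using
        (hg.block_append_coxeterPow_hurwitzEquiv (a := 0) (p := q) (k := 1) (by omega)).symm
    calc coxeterPow g m (q + 1 + 1)
        = coxeterPow g m (q + 1) ++ coxeterWord g m := coxeterPow_succ g m _
      _ ∼ₕ (block g 0 q ++ coxeterPow g m q ++ block g 0 (r + 1)) ++ coxeterWord g m :=
        (ih (by omega)).append_right _
      _ = block g 0 q ++ (coxeterPow g m q ++ [g 0]) ++ (block g 1 r ++ coxeterWord g m) := by
        simp [block_succ]
      _ ∼ₕ block g 0 q ++ ([g q] ++ coxeterPow g m q) ++ (coxeterWord g m ++ block g 0 r) :=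
        (hletter.append_left _).append (hg.block_append_coxeterWord_hurwitzEquiv (by omega))
      _ = block g 0 (q + 1) ++ coxeterPow g m (q + 1) ++ block g 0 r := by
        simp [block_succ', coxeterPow_succ]

theorem coxeterPow_hurwitzEquiv_rotate {k r : ℕ} (h : k + r = m) :
    coxeterPow g m (m + 1) ∼ₕ block g k r ++ coxeterPow g m m ++ block g 0 k := by
  calc coxeterPow g m (m + 1)
      = coxeterPow g m k ++ coxeterPow g m (r + 1) := by
        rw [← coxeterPow_add, ← h, Nat.add_assoc]
    _ ∼ₕ (coxeterPow g m k ++ block g 0 r) ++ (coxeterPow g m r ++ block g 0 k) := by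
      simpa using (hg.coxeterPow_succ_hurwitzEquiv (q := r) (r := k) (by omega)).append_left
        (coxeterPow g m k)
    _ ∼ₕ (block g k r ++ coxeterPow g m k) ++ (coxeterPow g m r ++ block g 0 k) := by
      simpa using (hg.block_append_coxeterPow_hurwitzEquiv (a := 0) (p := k) (k := r)
        (by omega)).symm.append_right (coxeterPow g m r ++ block g 0 k)
    _ = block g k r ++ coxeterPow g m m ++ block g 0 k := by
      simp [← h, coxeterPow_add]

theorem coxeterPow_hurwitzEquiv_map_conj {J : ℕ} (hJ : J < m) :
    coxeterPow g m (m + 1) ∼ₕ (coxeterPow g m (m + 1)).map (MulAut.conj (g J)) := by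
  obtain ⟨r, hr⟩ : ∃ r, J + 1 + r = m := ⟨m - (J + 1), by omega⟩
  apply hurwitzEquiv_map_conj_of_cons_of_append
    (A := block g (J + 1) r ++ coxeterPow g m m ++ block g 0 J)
  · simpa [block_succ] using
      hg.coxeterPow_hurwitzEquiv_rotate (k := J) (r := r + 1) (by omega)
  · simpa [block_succ'] using hg.coxeterPow_hurwitzEquiv_rotate (k := J + 1) (r := r) hr

end IsBraidFamily

theorem σ_commute_s7 {n : ℕ} {i j : Fin n} (h : i.val + 2 ≤ j.val) : Commute (σ i) (σ j) :=
  PresentedGroup.mk_eq_mk_of_mul_inv_mem (Or.inl ⟨i, j, h, rfl⟩)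

theorem σ_braid_s7 {n : ℕ} {i j : Fin n} (h : i.val + 1 = j.val) :
    σ i * σ j * σ i = σ j * σ i * σ j :=
  PresentedGroup.mk_eq_mk_of_mul_inv_mem (Or.inr ⟨i, j, h, rfl⟩)

-- Indexing by `ℕ` keeps the index arithmetic above free of `Fin` casts; the value `1` past the
-- last generator is never used.
def artinGen (m i : ℕ) : BraidGroup m := if h : i < m then σ ⟨i, h⟩ else 1

theorem artinGen_of_lt {m i : ℕ} (h : i < m) : artinGen m i = σ ⟨i, h⟩ := dif_pos h

theorem isBraidFamily_artinGen (m : ℕ) : IsBraidFamily (artinGen m) m where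
  commute i j h hj := by
    rw [artinGen_of_lt (by omega), artinGen_of_lt hj]
    exact σ_commute_s7 h
  braid i hi := by
    rw [artinGen_of_lt (by omega), artinGen_of_lt hi]
    exact σ_braid_s7 rfl

theorem ofFn_σ_eq_coxeterWord (m : ℕ) :
    List.ofFn (fun i : Fin m => σ i) = coxeterWord (artinGen m) m := by
  refine List.ext_getElem (by simp [coxeterWord, block]) fun i hi _ => ?_
  simp [coxeterWord, block, artinGen_of_lt (List.length_ofFn ▸ hi)]

theorem hurwitz_equiv_conj_by_gen_general {n : ℕ} (j : Fin (n - 1)) :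
    HurwitzEquiv
      (List.replicate n (List.ofFn fun i : Fin (n - 1) => σ i)).flatten
      (List.replicate n (List.ofFn fun i : Fin (n - 1) => σ j * σ i * (σ j)⁻¹)).flatten := by
  have hn : n - 1 + 1 = n := by have := j.isLt; omega
  have key := (isBraidFamily_artinGen (n - 1)).coxeterPow_hurwitzEquiv_map_conj j.isLt
  rw [hn] at key
  simpa [coxeterPow, ← ofFn_σ_eq_coxeterWord, List.map_flatten, List.map_ofFn, Function.comp_def,
    artinGen_of_lt j.isLt] using key

/-- Conjugating the standard `Δₙ²` factorization `(σ₁ ⋯ σₙ₋₁)ⁿ` by a single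
generator `σⱼ` yields a Hurwitz equivalent factorization. -/
theorem hurwitz_equiv_conj_by_gen {n : ℕ} (hn : 2 ≤ n) (j : Fin (n - 1)) :
    HurwitzEquiv
      (List.replicate n (List.ofFn fun i : Fin (n - 1) => σ i)).flatten
      (List.replicate n (List.ofFn fun i : Fin (n - 1) => σ j * σ i * (σ j)⁻¹)).flatten :=
  hurwitz_equiv_conj_by_gen_general j
end

section
/- (Garside normal form) Let n ≥ 2 and let σ_1,…,σ_{n−1} be the standard Artin generators of B_n, and let Δ_n = (σ_1)(σ_2σ_1)(σ_3σ_2σ_1)⋯(σ_{n−1}σ_{n−2}⋯σ_1) be the Garside half-twist element. Then every braid P ∈ B_n can be written as P = Δ_n^r · Q where r is an integer and Q is a positive braid, i.e. a (possibly empty) product of the generators σ_1,…,σ_{n−1} with positive exponents only. -/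
/-- The Garside half-twist `Δₙ = (σ₁)(σ₂σ₁)(σ₃σ₂σ₁)⋯(σₙ₋₁σₙ₋₂⋯σ₁)`
(zero-based: block `i` is `σᵢ σᵢ₋₁ ⋯ σ₀`). -/
def Delta (n : ℕ) : BraidGroup (n - 1) :=
  (List.ofFn fun i : Fin (n - 1) =>
    (List.ofFn fun k : Fin (i.val + 1) =>
      σ (⟨i.val - k.val, lt_of_le_of_lt (Nat.sub_le _ _) i.isLt⟩ : Fin (n - 1))).prod).prod

/-!
The Garside element `Δ` conjugates `σᵢ` to `σ_{n-i}`, so conjugation by any power of `Δ`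
preserves the monoid of positive braids, and every `σᵢ` is a right divisor of `Δ` in that
monoid, so that `σᵢ⁻¹ = Δ⁻¹ Q` with `Q` positive. Hence the braids `Δʳ Q` with `Q` positive
contain the generators and their inverses and are closed under multiplication, as
`Δʳ Q Δᵗ Q' = Δ^(r + t) (Δ⁻ᵗ Q Δᵗ) Q'`: they form the whole group. Both facts about `Δ` follow by
induction on the number of strands from the factorizations
`Δ = Δ' (σ_{n-1} ⋯ σ₁) = (σ_{n-1} ⋯ σ₁) Δ'' = (σ₁ ⋯ σ_{n-1}) Δ'`, where `Δ'` and `Δ''` are the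
Garside elements of the first and of the last `n - 1` strands.
-/

lemma Submonoid.exists_list_map_prod_eq_of_mem_closure_range {ι M : Type*} [Monoid M]
    {f : ι → M} {x : M} (hx : x ∈ Submonoid.closure (Set.range f)) :
    ∃ w : List ι, (w.map f).prod = x := by
  rw [← FreeMonoid.mrange_lift] at hx
  obtain ⟨y, rfl⟩ := hx
  exact ⟨y.toList, (FreeMonoid.lift_apply f y).symm⟩

section NormalForm

variable {G : Type*} [Group G] {S : Set G}

lemma conj_mem_closure_of_forall_conj_mem {g : G} (h : ∀ s ∈ S, g * s * g⁻¹ ∈ S) {q : G}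
    (hq : q ∈ Submonoid.closure S) : g * q * g⁻¹ ∈ Submonoid.closure S := by
  induction hq using Submonoid.closure_induction with
  | mem s hs => exact Submonoid.subset_closure (h s hs)
  | one => simp
  | mul a b _ _ ha hb =>
      simpa only [mul_assoc, inv_mul_cancel_left] using mul_mem ha hb

lemma zpow_conj_mem_of_forall_conj_mem {Δ : G} (h : ∀ s ∈ S, Δ * s * Δ⁻¹ ∈ S)
    (h' : ∀ s ∈ S, Δ⁻¹ * s * Δ ∈ S) (r : ℤ) : ∀ s ∈ S, Δ ^ r * s * (Δ ^ r)⁻¹ ∈ S := by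
  induction r using Int.induction_on with
  | zero => simp
  | succ r ih =>
      intro s hs
      simpa only [zpow_add_one, mul_inv_rev, mul_assoc] using ih _ (h s hs)
  | pred r ih =>
      intro s hs
      simpa only [zpow_sub_one, mul_inv_rev, inv_inv, mul_assoc] using ih _ (h' s hs)

theorem exists_eq_zpow_mul_of_closure_eq_top (hS : Subgroup.closure S = ⊤) {Δ : G}
    (hconj : ∀ s ∈ S, Δ * s * Δ⁻¹ ∈ S) (hconj' : ∀ s ∈ S, Δ⁻¹ * s * Δ ∈ S)
    (hdvd : ∀ s ∈ S, Δ * s⁻¹ ∈ Submonoid.closure S) (g : G) :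
    ∃ r : ℤ, ∃ q ∈ Submonoid.closure S, g = Δ ^ r * q := by
  have hg : g ∈ Subgroup.closure S := hS ▸ Subgroup.mem_top g
  induction hg using Subgroup.closure_induction'' with
  | mem s hs => exact ⟨0, s, Submonoid.subset_closure hs, by simp⟩
  | inv_mem s hs => exact ⟨-1, Δ * s⁻¹, hdvd s hs, by simp⟩
  | one => exact ⟨0, 1, one_mem _, by simp⟩
  | mul a b _ _ ha hb =>
      obtain ⟨r, p, hp, rfl⟩ := ha
      obtain ⟨t, q, hq, rfl⟩ := hb
      have hp' := conj_mem_closure_of_forall_conj_mem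
        (zpow_conj_mem_of_forall_conj_mem hconj hconj' (-t)) hp
      refine ⟨r + t, _, mul_mem hp' hq, ?_⟩
      simp only [zpow_neg, inv_inv, zpow_add, mul_assoc, mul_inv_cancel_left]

end NormalForm

namespace BraidGroup

variable {m : ℕ}

lemma σ_commute {i j : Fin m} (h : i.val + 2 ≤ j.val) : Commute (σ i) (σ j) :=
  PresentedGroup.mk_eq_mk_of_mul_inv_mem (Or.inl ⟨i, j, h, rfl⟩)

lemma σ_braid {i j : Fin m} (h : i.val + 1 = j.val) :
    σ i * σ j * σ i = σ j * σ i * σ j :=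
  PresentedGroup.mk_eq_mk_of_mul_inv_mem (Or.inr ⟨i, j, h, rfl⟩)

lemma gen_of_le {i : ℕ} (h : m ≤ i) : (gen i : BraidGroup m) = 1 := dif_neg (not_lt.mpr h)

lemma gen_commute {i j : ℕ} (h : i + 2 ≤ j) : Commute (gen i : BraidGroup m) (gen j) := by
  by_cases hj : j < m
  · rw [gen_of_lt (by omega), gen_of_lt hj]
    exact σ_commute h
  · rw [gen_of_le (not_lt.mp hj)]
    exact Commute.one_right _

lemma semiconjBy_gen_mul_gen_succ {i : ℕ} (h : i + 1 < m) :
    SemiconjBy ((gen i : BraidGroup m) * gen (i + 1)) (gen i) (gen (i + 1)) := by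
  rw [SemiconjBy, gen_braid h, mul_assoc]

lemma semiconjBy_gen_succ_mul_gen {i : ℕ} (h : i + 1 < m) :
    SemiconjBy ((gen (i + 1) : BraidGroup m) * gen i) (gen (i + 1)) (gen i) := by
  rw [SemiconjBy, ← gen_braid h, mul_assoc]

abbrev positive (m : ℕ) : Submonoid (BraidGroup m) := Submonoid.closure (Set.range σ)

lemma gen_mem_positive (i : ℕ) : (gen i : BraidGroup m) ∈ positive m := by
  unfold gen
  split_ifs
  · exact Submonoid.subset_closure (Set.mem_range_self _)
  · exact one_mem _

def descWord (s : ℕ) : ℕ → BraidGroup m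
  | 0 => 1
  | l + 1 => gen (s + l) * descWord s l

def ascWord (s : ℕ) : ℕ → BraidGroup m
  | 0 => 1
  | l + 1 => ascWord s l * gen (s + l)

lemma descWord_succ (s l : ℕ) :
    (descWord s (l + 1) : BraidGroup m) = gen (s + l) * descWord s l := rfl

lemma ascWord_succ (s l : ℕ) :
    (ascWord s (l + 1) : BraidGroup m) = ascWord s l * gen (s + l) := rfl

lemma descWord_succ' (s l : ℕ) :
    (descWord s (l + 1) : BraidGroup m) = descWord (s + 1) l * gen s := by
  induction l with
  | zero => simp [descWord]
  | succ l ih =>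
      rw [descWord_succ, ih, descWord_succ, mul_assoc, Nat.add_right_comm, ← add_assoc]

lemma descWord_succ_eq_prod_ofFn (s l : ℕ) :
    (descWord s (l + 1) : BraidGroup m) =
      (List.ofFn fun k : Fin (l + 1) => gen (s + l - k)).prod := by
  induction l with
  | zero => simp [descWord]
  | succ l ih =>
      rw [descWord_succ, ih, List.ofFn_succ, List.prod_cons]
      simp [Nat.add_sub_add_right, ← add_assoc]

lemma descWord_mem_positive (s l : ℕ) : (descWord s l : BraidGroup m) ∈ positive m := by
  induction l with
  | zero => exact one_mem _
  | succ l ih => exact mul_mem (gen_mem_positive _) ih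

lemma gen_commute_descWord {s l j : ℕ} (h : s + l + 1 ≤ j) :
    Commute (gen j : BraidGroup m) (descWord s l) := by
  induction l with
  | zero => exact Commute.one_right _
  | succ l ih => exact ((gen_commute (by omega)).symm).mul_right (ih (by omega))

lemma gen_commute_ascWord {s l j : ℕ} (h : s + l + 1 ≤ j) :
    Commute (gen j : BraidGroup m) (ascWord s l) := by
  induction l with
  | zero => exact Commute.one_right _
  | succ l ih => exact (ih (by omega)).mul_right (gen_commute (by omega)).symm

lemma semiconjBy_descWord_gen {s l i : ℕ} (h₁ : s ≤ i) (h₂ : i + 2 ≤ s + l) (h : i + 1 < m) :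
    SemiconjBy (descWord s l : BraidGroup m) (gen (i + 1)) (gen i) := by
  induction l with
  | zero => omega
  | succ l ih =>
      by_cases hl : i + 2 ≤ s + l
      · exact SemiconjBy.mul_left (gen_commute hl).symm (ih hl)
      · obtain ⟨l, rfl⟩ : ∃ l', l = l' + 1 := ⟨l - 1, by omega⟩
        obtain rfl : i = s + l := by omega
        rw [descWord_succ, descWord_succ, ← add_assoc, ← mul_assoc]
        exact (semiconjBy_gen_succ_mul_gen h).mul_left (gen_commute_descWord le_rfl).symm

lemma semiconjBy_ascWord_gen {s l i : ℕ} (h₁ : s ≤ i) (h₂ : i + 2 ≤ s + l) (h : i + 1 < m) :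
    SemiconjBy (ascWord s l : BraidGroup m) (gen i) (gen (i + 1)) := by
  induction l with
  | zero => omega
  | succ l ih =>
      by_cases hl : i + 2 ≤ s + l
      · exact SemiconjBy.mul_left (ih hl) (gen_commute hl).symm
      · obtain ⟨l, rfl⟩ : ∃ l', l = l' + 1 := ⟨l - 1, by omega⟩
        obtain rfl : i = s + l := by omega
        rw [ascWord_succ, ascWord_succ, ← add_assoc, mul_assoc]
        exact SemiconjBy.mul_left (gen_commute_ascWord le_rfl).symm
          (semiconjBy_gen_mul_gen_succ h)

lemma semiconjBy_descWord_descWord {s L c l : ℕ} (h₁ : s ≤ c) (h₂ : c + l + 1 ≤ s + L)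
    (h₃ : s + L ≤ m) :
    SemiconjBy (descWord s L : BraidGroup m) (descWord (c + 1) l) (descWord c l) := by
  induction l with
  | zero => exact SemiconjBy.one_right _
  | succ l ih =>
      rw [descWord_succ, descWord_succ, Nat.add_right_comm]
      exact (semiconjBy_descWord_gen (by omega) (by omega) (by omega)).mul_right (ih (by omega))

/-- The Garside element of the `k` consecutive generators `gen s, …, gen (s + k - 1)`. -/
def halfTwist (s k : ℕ) : BraidGroup m := (List.ofFn fun i : Fin k => descWord s (i + 1)).prod

lemma halfTwist_zero (s : ℕ) : (halfTwist s 0 : BraidGroup m) = 1 := by simp [halfTwist]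

lemma halfTwist_succ (s k : ℕ) :
    (halfTwist s (k + 1) : BraidGroup m) = halfTwist s k * descWord s (k + 1) := by
  simp only [halfTwist, List.ofFn_succ', List.prod_concat, Fin.val_castSucc, Fin.val_last]

lemma halfTwist_mem_positive (s k : ℕ) : (halfTwist s k : BraidGroup m) ∈ positive m :=
  Submonoid.list_prod_mem _ fun _ hx ↦ by
    obtain ⟨i, rfl⟩ := List.mem_ofFn.mp hx
    exact descWord_mem_positive _ _

lemma semiconjBy_descWord_halfTwist {s L k : ℕ} (h : k + 1 ≤ L) (hL : s + L ≤ m) :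
    SemiconjBy (descWord s L : BraidGroup m) (halfTwist (s + 1) k) (halfTwist s k) := by
  induction k with
  | zero => simp only [halfTwist_zero]; exact SemiconjBy.one_right _
  | succ k ih =>
      rw [halfTwist_succ, halfTwist_succ]
      exact (ih (by omega)).mul_right (semiconjBy_descWord_descWord le_rfl (by omega) hL)

lemma halfTwist_succ_eq_descWord_mul {s k : ℕ} (h : s + k + 1 ≤ m) :
    (halfTwist s (k + 1) : BraidGroup m) = descWord s (k + 1) * halfTwist (s + 1) k := by
  rw [halfTwist_succ, (semiconjBy_descWord_halfTwist (k := k) le_rfl h).eq]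

lemma halfTwist_succ_eq_ascWord_mul {s k : ℕ} (h : s + k + 1 ≤ m) :
    (halfTwist s (k + 1) : BraidGroup m) = ascWord s (k + 1) * halfTwist s k := by
  induction k with
  | zero => simp [halfTwist, descWord, ascWord]
  | succ k ih =>
      calc (halfTwist s (k + 2) : BraidGroup m)
          = ascWord s (k + 1) * (halfTwist s k * descWord s (k + 2)) := by
            rw [halfTwist_succ, ih (by omega), mul_assoc]
        _ = ascWord s (k + 1) * (descWord s (k + 2) * halfTwist (s + 1) k) := by
            rw [(semiconjBy_descWord_halfTwist (by omega) (by omega)).eq]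
        _ = ascWord s (k + 1) * gen (s + (k + 1)) *
              (descWord s (k + 1) * halfTwist (s + 1) k) := by
            rw [descWord_succ]; simp only [mul_assoc]
        _ = ascWord s (k + 2) * halfTwist s (k + 1) := by
            rw [← ascWord_succ, halfTwist_succ_eq_descWord_mul (by omega)]

lemma semiconjBy_halfTwist_gen {s k j t : ℕ} (hk : j + t + 1 = k) (h : s + k ≤ m) :
    SemiconjBy (halfTwist s k : BraidGroup m) (gen (s + j)) (gen (s + t)) := by
  induction k generalizing j t with
  | zero => omega
  | succ k ih =>
      rcases j with _ | j
      -- `gen s` does not occur in `halfTwist (s + 1) k`, so it is moved through `ascWord`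
      · rcases k with _ | k
        · obtain rfl : t = 0 := by omega
          simp only [halfTwist_succ, halfTwist_zero, descWord, one_mul, mul_one]
          exact Commute.refl _
        · obtain rfl : t = k + 1 := by omega
          rw [halfTwist_succ_eq_ascWord_mul h]
          exact (semiconjBy_ascWord_gen (i := s + k) (by omega) (by omega) (by omega)).mul_left
            (ih (j := 0) (t := k) (by omega) (by omega))
      · rw [halfTwist_succ]
        exact (ih (j := j) (t := t) (by omega) (by omega)).mul_left
          (semiconjBy_descWord_gen (i := s + j) (by omega) (by omega) (by omega))

lemma exists_halfTwist_eq_mul_gen {s k j : ℕ} (hj : j < k) (h : s + k ≤ m) :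
    ∃ q ∈ positive m, halfTwist s k = q * gen (s + j) := by
  induction k generalizing s j with
  | zero => omega
  | succ k ih =>
      rcases j with _ | j
      · refine ⟨halfTwist s k * descWord (s + 1) k,
          mul_mem (halfTwist_mem_positive _ _) (descWord_mem_positive _ _), ?_⟩
        rw [halfTwist_succ, descWord_succ', mul_assoc, add_zero]
      · obtain ⟨q, hq, hq'⟩ := ih (s := s + 1) (j := j) (by omega) (by omega)
        refine ⟨descWord s (k + 1) * q, mul_mem (descWord_mem_positive _ _) hq, ?_⟩
        rw [halfTwist_succ_eq_descWord_mul (by omega), hq', mul_assoc, Nat.add_right_comm,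
          add_assoc]

lemma halfTwist_mul_σ (j : Fin m) :
    (halfTwist 0 m : BraidGroup m) * σ j = σ j.rev * halfTwist 0 m := by
  have hj := j.isLt
  have key := semiconjBy_halfTwist_gen (m := m) (s := 0) (k := m) (j := j) (t := j.rev)
    (by simp only [Fin.val_rev]; omega) (by omega)
  rwa [zero_add, zero_add, gen_of_lt hj, gen_of_lt j.rev.isLt] at key

theorem exists_eq_halfTwist_zpow_mul (P : BraidGroup m) :
    ∃ r : ℤ, ∃ q ∈ positive m, P = halfTwist 0 m ^ r * q := by
  refine exists_eq_zpow_mul_of_closure_eq_top (S := Set.range σ)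
    (PresentedGroup.closure_range_of _) ?_ ?_ ?_ P
  · rintro _ ⟨j, rfl⟩
    exact ⟨j.rev, by rw [halfTwist_mul_σ, mul_inv_cancel_right]⟩
  · rintro _ ⟨j, rfl⟩
    have key := halfTwist_mul_σ j.rev
    rw [Fin.rev_rev] at key
    exact ⟨j.rev, by rw [mul_assoc, ← key, inv_mul_cancel_left]⟩
  · rintro _ ⟨j, rfl⟩
    obtain ⟨q, hq, hΔ⟩ := exists_halfTwist_eq_mul_gen (m := m) (s := 0) j.isLt (by omega)
    rwa [hΔ, zero_add, gen_of_lt j.isLt, mul_inv_cancel_right]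

end BraidGroup

lemma Delta_eq_halfTwist (n : ℕ) : Delta n = BraidGroup.halfTwist 0 (n - 1) := by
  unfold Delta BraidGroup.halfTwist
  congr
  funext i
  rw [BraidGroup.descWord_succ_eq_prod_ofFn]
  congr
  funext k
  rw [BraidGroup.gen_of_lt (by omega)]
  simp

theorem garside_normal_form_general {n : ℕ} (P : BraidGroup (n - 1)) :
    ∃ (r : ℤ) (w : List (Fin (n - 1))), P = Delta n ^ r * (w.map σ).prod := by
  obtain ⟨r, q, hq, rfl⟩ := BraidGroup.exists_eq_halfTwist_zpow_mul P
  obtain ⟨w, rfl⟩ := Submonoid.exists_list_map_prod_eq_of_mem_closure_range hq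
  exact ⟨r, w, by rw [Delta_eq_halfTwist]⟩

/-- (Garside normal form) Every braid `P ∈ Bₙ` can be written as `Δₙʳ · Q`
with `r ∈ ℤ` and `Q` a positive braid (a product of generators with positive
exponents only). -/
theorem garside_normal_form {n : ℕ} (hn : 2 ≤ n) (P : BraidGroup (n - 1)) :
    ∃ (r : ℤ) (w : List (Fin (n - 1))), P = Delta n ^ r * (w.map σ).prod :=
  garside_normal_form_general P
end
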